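/- Let P_{m,k}(q) = \det( h_{m-k-i+2j-1}(\{1,q\}^{i-j+2}) )_{i,j \in \{0,\dots,k-1\}}. Then P_{m,k} is a polynomial in q with nonnegative integer coefficients. -/

import Mathlib

/-!
With `W = 1 / ((1 - t) (1 - q t))`, the `(i, j)` entry of the matrix defining `P m k` is the
coefficient of `t ^ c_j` in `t ^ i W ^ (i + 2 - j)`, where `c_j = m - k - 1 + 2 j`. Such a flagged
Jacobi–Trudi matrix is a minor of a matrix built from unit vectors by column operations
`col a' += z • col a` with `z ∈ {1, q}`, each performed while all columns strictly between `a`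
and `a'` vanish, and by clearing columns. These operations preserve the property that every minor
with increasing rows and columns has nonnegative coefficients; this is the planar-network form of
the Lindström–Gessel–Viennot argument.

The construction runs through stages `s = k, …, 0`. Stage `s` first moves row `s - 1` from its
parking column into the working region, then sweeps the working region up to position `c_s`
once with `1` and once with `q`. A sweep multiplies every row, read as a power series in `t`,
by a geometric series. Column `c_j` is out of reach from stage `j - 1` on, so in row `i` it
collects exactly the stages `j, …, i + 1`.
-/

open Finset Polynomial

/-- `h_j({1,q}^r)` as a polynomial in `q` over `ℤ`: the complete homogeneous symmetric
polynomial of degree `j` in `2r` variables, `r` specialized to `q` and `r` to `1`;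
it vanishes for `j < 0`, and `h_0 = 1`. -/
noncomputable def hgen (j r : ℤ) : Polynomial ℤ :=
  if 0 ≤ j ∧ 0 < r then
    ∑ i ∈ range (j.toNat + 1),
      ((((r - 1).toNat + i).choose (r - 1).toNat : Polynomial ℤ) *
        ((j.toNat + (r - 1).toNat - i).choose (r - 1).toNat : Polynomial ℤ)) * X ^ i
  else if j = 0 then 1 else 0

/-- The `q`-Faulhaber polynomial
`P_{m,k} = det( h_{m-k-i+2j-1}({1,q}^{i-j+2}) )_{i,j ∈ {0,…,k-1}}`. -/
noncomputable def P (m k : ℕ) : Polynomial ℤ :=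
  Matrix.det (Matrix.of fun i j : Fin k =>
    hgen ((m : ℤ) - k - i + 2 * j - 1) ((i : ℤ) - j + 2))

namespace Polynomial

variable (R : Type*) [Semiring R] [PartialOrder R] [IsOrderedRing R]

def nonnegCoeffs : Subsemiring R[X] where
  carrier := {p | ∀ n, 0 ≤ p.coeff n}
  mul_mem' {p q} hp hq n := by
    rw [coeff_mul]
    exact sum_nonneg fun x _ => mul_nonneg (hp _) (hq _)
  one_mem' n := by
    rw [coeff_one]
    split_ifs <;> simp
  add_mem' {p q} hp hq n := by
    rw [coeff_add]
    exact add_nonneg (hp n) (hq n)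
  zero_mem' n := by simp

theorem X_mem_nonnegCoeffs : (X : R[X]) ∈ nonnegCoeffs R := fun n => by
  rw [coeff_X]
  split_ifs <;> simp

end Polynomial

namespace PowerSeries

variable {R : Type*} [CommRing R]

noncomputable def geom (z : R) : PowerSeries R := rescale z (mk 1)

@[simp]
theorem coeff_geom (z : R) (n : ℕ) : coeff n (geom z) = z ^ n := by
  simp [geom]

theorem coeff_geom_mul_geom_one_pow (q : R) (r d : ℕ) :
    coeff d ((geom q * geom 1) ^ (r + 1)) =
      ∑ l ∈ range (d + 1), (((r + l).choose r : R) * ((d + r - l).choose r : R)) * q ^ l := by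
  rw [mul_pow, geom, geom, rescale_one, RingHom.id_apply, ← map_pow,
    mk_one_pow_eq_mk_choose_add, coeff_mul, Nat.sum_antidiagonal_eq_sum_range_succ_mk]
  refine sum_congr rfl fun l hl => ?_
  rw [coeff_rescale, coeff_mk, coeff_mk, show d + r - l = r + (d - l) by
    have := mem_range.mp hl; omega]
  ring

end PowerSeries

theorem StrictMono.update_of_forall_notMem_Ico {κ : Type*} [LinearOrder κ] {t : ℕ}
    {c : Fin t → κ} (hc : StrictMono c) {j₀ : Fin t} {a : κ} (ha : a < c j₀)
    (hgap : ∀ j, c j ∉ Set.Ico a (c j₀)) : StrictMono (Function.update c j₀ a) := by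
  intro x y hxy
  simp only [Function.update_apply]
  split_ifs with hx hy hy
  · exact absurd (hx ▸ hy ▸ hxy) (lt_irrefl _)
  · exact ha.trans (hc (hx ▸ hxy))
  · have hx_gap := hgap x
    simp only [Set.mem_Ico, not_and] at hx_gap
    exact not_le.mp fun h => hx_gap h (hc (hy ▸ hxy))
  · exact hc hxy

namespace Matrix

variable {ι κ R : Type*} [CommRing R]

section ColumnOperations

variable [DecidableEq κ]

def addCol (M : Matrix ι κ R) (a a' : κ) (z : R) : Matrix ι κ R :=
  M.updateCol a' fun s => M s a' + z * M s a

theorem addCol_apply (M : Matrix ι κ R) (a a' : κ) (z : R) (s : ι) (col : κ) :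
    M.addCol a a' z s col = if col = a' then M s a' + z * M s a else M s col := by
  simp [addCol, updateCol_apply]

def moveCol (M : Matrix ι κ R) (a a' : κ) : Matrix ι κ R :=
  (M.addCol a a' 1).updateCol a 0

theorem moveCol_apply (M : Matrix ι κ R) (a a' : κ) (s : ι) (col : κ) :
    M.moveCol a a' s col =
      if col = a then 0 else if col = a' then M s a' + M s a else M s col := by
  unfold moveCol
  rw [updateCol_apply, addCol_apply]
  split_ifs <;> simp_all

end ColumnOperations

section Sweeps

def sweep (o : ℕ) (z : R) : ℕ → Matrix ι ℕ R → Matrix ι ℕ R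
  | 0, M => M
  | h + 1, M => (sweep o z h M).addCol (o + h) (o + h + 1) z

def sweeps (o h : ℕ) (zs : List R) (M : Matrix ι ℕ R) : Matrix ι ℕ R :=
  zs.foldr (fun z N => N.sweep o z h) M

variable {o h : ℕ} {z : R} {M : Matrix ι ℕ R}

theorem sweep_apply_of_notMem {col : ℕ} (hcol : col ∉ Set.Ioc o (o + h)) (s : ι) :
    M.sweep o z h s col = M s col := by
  induction h with
  | zero => rfl
  | succ h ih =>
    simp only [Set.mem_Ioc, not_and_or, not_lt, not_le] at hcol
    rw [sweep, addCol_apply, if_neg (by omega), ih (by simp only [Set.mem_Ioc]; omega)]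

theorem sweep_apply_add {v : ℕ} (hv : v ≤ h) (s : ι) :
    M.sweep o z h s (o + v) = ∑ x ∈ antidiagonal v, M s (o + x.1) * z ^ x.2 := by
  induction h generalizing v with
  | zero => simp [Nat.le_zero.mp hv, sweep]
  | succ h ih =>
    rw [sweep, addCol_apply]
    rcases hv.lt_or_eq with hv | rfl
    · rw [if_neg (by omega), ih (by omega)]
    · rw [if_pos (by omega), Nat.sum_antidiagonal_succ', ih le_rfl,
        sweep_apply_of_notMem (by simp), mul_sum, ← add_assoc]
      simp [pow_succ, mul_left_comm, mul_comm]

theorem sweep_apply_eq_coeff {s : ι} {F : PowerSeries R}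
    (hF : ∀ p ≤ h, M s (o + p) = PowerSeries.coeff p F) (z : R) {v : ℕ} (hv : v ≤ h) :
    M.sweep o z h s (o + v) = PowerSeries.coeff v (F * PowerSeries.geom z) := by
  rw [sweep_apply_add hv, PowerSeries.coeff_mul]
  refine sum_congr rfl fun x hx => ?_
  rw [hF _ ((HasAntidiagonal.antidiagonal.fst_le hx).trans hv), PowerSeries.coeff_geom]

theorem sweeps_apply_of_notMem (zs : List R) {col : ℕ} (hcol : col ∉ Set.Ioc o (o + h))
    (s : ι) : M.sweeps o h zs s col = M s col := by
  induction zs with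
  | nil => rfl
  | cons z zs ih => rw [sweeps, List.foldr_cons, sweep_apply_of_notMem hcol, ← ih]; rfl

theorem sweeps_apply_eq_coeff (zs : List R) {s : ι} {F : PowerSeries R}
    (hF : ∀ p ≤ h, M s (o + p) = PowerSeries.coeff p F) {v : ℕ} (hv : v ≤ h) :
    M.sweeps o h zs s (o + v) = PowerSeries.coeff v (F * (zs.map PowerSeries.geom).prod) := by
  induction zs generalizing v with
  | nil => simpa [sweeps] using hF v hv
  | cons z zs ih =>
    rw [sweeps, List.foldr_cons, ← sweeps, sweep_apply_eq_coeff (fun p hp => ih hp) z hv,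
      List.map_cons, List.prod_cons, mul_left_comm, mul_comm]

end Sweeps

section Minors

variable [LinearOrder ι] [LinearOrder κ] {S : Subsemiring R}

variable (S) in
def MinorsIn (M : Matrix ι κ R) : Prop :=
  ∀ ⦃t : ℕ⦄ (r : Fin t → ι) (c : Fin t → κ), StrictMono r → StrictMono c →
    (M.submatrix r c).det ∈ S

theorem minorsIn_one : MinorsIn S (1 : Matrix κ κ R) := by
  intro t r c hr hc
  by_cases hcols : ∀ j, ∃ i, r i = c j
  · have hcard : (univ.image r).card = t := by
      rw [card_image_of_injective _ hr.injective, card_univ, Fintype.card_fin]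
    have hcr : c = r := by
      refine (orderEmbOfFin_unique hcard (fun j => ?_) hc).trans
        (orderEmbOfFin_unique hcard (fun j => mem_image_of_mem r (mem_univ j)) hr).symm
      obtain ⟨i, hi⟩ := hcols j
      exact hi ▸ mem_image_of_mem r (mem_univ i)
    rw [hcr, submatrix_one _ hr.injective, det_one]
    exact one_mem S
  · push Not at hcols
    obtain ⟨j, hj⟩ := hcols
    rw [det_eq_zero_of_column_eq_zero j fun i => by simp [hj i]]
    exact zero_mem S

theorem MinorsIn.submatrix {ι' κ' : Type*} [LinearOrder ι'] [LinearOrder κ']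
    {M : Matrix ι κ R} (hM : MinorsIn S M) {e : ι' → ι} {f : κ' → κ}
    (he : StrictMono e) (hf : StrictMono f) : MinorsIn S (M.submatrix e f) :=
  fun _ r c hr hc => by
    rw [submatrix_submatrix]
    exact hM _ _ (he.comp hr) (hf.comp hc)

theorem MinorsIn.updateCol_zero {M : Matrix ι κ R} (hM : MinorsIn S M) (a : κ) :
    MinorsIn S (M.updateCol a 0) := by
  intro t r c hr hc
  by_cases ha : ∃ j, c j = a
  · obtain ⟨j, rfl⟩ := ha
    rw [det_eq_zero_of_column_eq_zero j fun i => by simp]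
    exact zero_mem S
  · push Not at ha
    have hsub : (M.updateCol a 0).submatrix r c = M.submatrix r c := by
      ext i j
      simp [ha j]
    exact hsub ▸ hM r c hr hc

/-- A minor through column `a'` gains `z` times the minor selecting `a` instead; since the columns
strictly between `a` and `a'` vanish, that minor has increasing columns or is zero. -/
theorem MinorsIn.addCol {M : Matrix ι κ R} (hM : MinorsIn S M) {a a' : κ} (haa' : a < a')
    {z : R} (hz : z ∈ S) (hgap : ∀ s w, a < w → w < a' → M s w = 0) :
    MinorsIn S (M.addCol a a' z) := by
  intro t r c hr hc
  by_cases ha' : ∃ j, c j = a'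
  swap
  · push Not at ha'
    have hsub : (M.addCol a a' z).submatrix r c = M.submatrix r c := by
      ext i j
      simp [addCol_apply, ha' j]
    exact hsub ▸ hM r c hr hc
  obtain ⟨j₀, hj₀⟩ := ha'
  have hupd : ∀ b, (M.submatrix r c).updateCol j₀ (fun s => M (r s) b)
      = M.submatrix r (Function.update c j₀ b) := by
    intro b
    ext i j
    by_cases hj : j = j₀ <;> simp [hj]
  have hsplit : (M.addCol a a' z).submatrix r c
      = (M.submatrix r c).updateCol j₀
          ((fun s => M (r s) a') + z • fun s => M (r s) a) := by
    ext i j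
    by_cases hj : j = j₀
    · simp [addCol_apply, hj, hj₀]
    · simp [addCol_apply, hj, hc.injective.ne_iff' hj₀]
  rw [hsplit, det_updateCol_add, det_updateCol_smul, hupd, hupd,
    Function.update_eq_self_iff.mpr hj₀.symm]
  refine add_mem (hM r c hr hc) (mul_mem hz ?_)
  by_cases hhit : ∃ j, c j ∈ Set.Ico a a'
  · obtain ⟨j₁, hj₁a, hj₁a'⟩ := hhit
    have hne : j₁ ≠ j₀ := fun h => (hj₀ ▸ h ▸ hj₁a').false
    rcases hj₁a.eq_or_lt with heq | hlt
    · rw [det_zero_of_column_eq hne fun i => by simp [hne, ← heq]]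
      exact zero_mem S
    · rw [det_eq_zero_of_column_eq_zero j₁ fun i => by simp [hne, hgap _ _ hlt hj₁a']]
      exact zero_mem S
  · push Not at hhit
    exact hM r _ hr (hc.update_of_forall_notMem_Ico (hj₀ ▸ haa') (hj₀ ▸ hhit))

theorem MinorsIn.moveCol {M : Matrix ι κ R} (hM : MinorsIn S M) {a a' : κ} (haa' : a < a')
    (hgap : ∀ s w, a < w → w < a' → M s w = 0) : MinorsIn S (M.moveCol a a') :=
  (hM.addCol haa' (one_mem S) hgap).updateCol_zero a

theorem MinorsIn.sweep {M : Matrix ι ℕ R} (hM : MinorsIn S M) {z : R} (hz : z ∈ S)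
    (o h : ℕ) : MinorsIn S (M.sweep o z h) := by
  induction h with
  | zero => exact hM
  | succ h ih => exact ih.addCol (by omega) hz fun _ _ _ _ => by omega

theorem MinorsIn.sweeps {M : Matrix ι ℕ R} (hM : MinorsIn S M) {zs : List R}
    (hzs : ∀ z ∈ zs, z ∈ S) (o h : ℕ) : MinorsIn S (M.sweeps o h zs) := by
  induction zs with
  | nil => exact hM
  | cons z zs ih =>
    exact (ih fun y hy => hzs y (List.mem_cons_of_mem z hy)).sweep (hzs z List.mem_cons_self) o h

end Minors

end Matrix

section Stages

variable {R : Type*} [CommRing R] (k : ℕ) (zs : List R) (c : ℕ → ℕ)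

/-- The state of the construction: a row `i` with `i + 1 < A` is still the unit vector parked in
column `i`; every other row `i` holds in column `k + v` the coefficient of `t ^ v` in
`t ^ i W ^ e`, where `W` is the product of the geometric series of `zs` and `e` counts the stages
`s ∈ [E, i + 1]` whose sweep reached position `v`, those with `v ≤ c s`. -/
noncomputable def stageMatrix (A E : ℕ) : Matrix (Fin k) ℕ R := Matrix.of fun i col =>
  if (i : ℕ) + 1 < A then if col = i then 1 else 0
  else if col < k then 0
  else PowerSeries.coeff (col - k) (PowerSeries.X ^ (i : ℕ) *
    (zs.map PowerSeries.geom).prod ^ #{s ∈ Icc E (i + 1) | col - k ≤ c s})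

theorem stageMatrix_top (E : ℕ) :
    stageMatrix k zs c (k + 1) E = (1 : Matrix ℕ ℕ R).submatrix Fin.val id := by
  ext i col
  simp [stageMatrix, Matrix.one_apply, eq_comm]

theorem stageMatrix_zero_left (E : ℕ) : stageMatrix k zs c 0 E = stageMatrix k zs c 1 E := by
  ext i col
  simp [stageMatrix]

theorem stageMatrix_apply_eq_zero {a E : ℕ} {w : ℕ} (haw : a < w) (hw : w < k + a) (s : Fin k) :
    stageMatrix k zs c (a + 2) E s w = 0 := by
  simp only [stageMatrix, Matrix.of_apply]
  split_ifs with h1 h2 h3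
  · omega
  · rfl
  · rfl
  · rw [PowerSeries.coeff_X_pow_mul', if_neg (by omega)]

theorem moveCol_stageMatrix {a E : ℕ} (ha : a < k) (hE : a + 1 < E) :
    (stageMatrix k zs c (a + 2) E).moveCol a (k + a) = stageMatrix k zs c (a + 1) E := by
  ext i col
  rw [Matrix.moveCol_apply]
  by_cases hi : (i : ℕ) = a
  · simp only [stageMatrix, Matrix.of_apply, hi, Icc_eq_empty_of_lt hE, filter_empty,
      card_empty, pow_zero, mul_one, PowerSeries.coeff_X_pow]
    split_ifs <;> first | omega | simp
  · have hcond : ((i : ℕ) + 1 < a + 2) = ((i : ℕ) + 1 < a + 1) := propext (by omega)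
    have hrow : stageMatrix k zs c (a + 2) E i = stageMatrix k zs c (a + 1) E i := by
      ext col
      simp only [stageMatrix, Matrix.of_apply, hcond]
    have h0 : stageMatrix k zs c (a + 2) E i a = 0 := by
      simp only [stageMatrix, Matrix.of_apply]
      split_ifs <;> first | rfl | omega
    rw [h0, add_zero, ← hrow]
    split_ifs with h h'
    · exact h ▸ h0.symm
    · rw [h']
    · rfl

theorem card_filter_Icc_of_le {c : ℕ → ℕ} (hc : Monotone c) {S E v n : ℕ} (hSE : S ≤ E)
    (hv : v ≤ c S) : #{s ∈ Icc E n | v ≤ c s} = n + 1 - E := by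
  rw [filter_true_of_mem fun s hs => hv.trans (hc (hSE.trans (mem_Icc.mp hs).1)), Nat.card_Icc]

variable {c} in
theorem sweeps_stageMatrix (hc : StrictMono c) (S : ℕ) :
    (stageMatrix k zs c S (S + 1)).sweeps k (c S) zs = stageMatrix k zs c S S := by
  ext i col
  rcases lt_or_ge col k with hcol | hcol
  · rw [Matrix.sweeps_apply_of_notMem _ (by simp only [Set.mem_Ioc]; omega)]
    simp [stageMatrix, hcol]
  obtain ⟨v, rfl⟩ := Nat.exists_eq_add_of_le hcol
  rcases le_or_gt v (c S) with hv | hv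
  · have hF (p : ℕ) (hp : p ≤ c S) : stageMatrix k zs c S (S + 1) i (k + p) =
        PowerSeries.coeff p (if (i : ℕ) + 1 < S then 0 else
          PowerSeries.X ^ (i : ℕ) * (zs.map PowerSeries.geom).prod ^ ((i : ℕ) + 1 - S)) := by
      simp only [stageMatrix, Matrix.of_apply, add_tsub_cancel_left,
        card_filter_Icc_of_le hc.monotone (Nat.le_succ S) hp]
      split_ifs <;> first | omega | simp
    rw [Matrix.sweeps_apply_eq_coeff zs hF hv]
    simp only [stageMatrix, Matrix.of_apply, add_tsub_cancel_left,
      card_filter_Icc_of_le hc.monotone le_rfl hv]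
    have hik := i.isLt
    split_ifs
    · omega
    · simp
    · omega
    · rw [mul_assoc, ← pow_succ, show (i : ℕ) + 1 - S + 1 = (i : ℕ) + 1 + 1 - S by omega]
  · rw [Matrix.sweeps_apply_of_notMem _ (by simp only [Set.mem_Ioc]; omega)]
    have hskip : {s ∈ Icc S ((i : ℕ) + 1) | v ≤ c s}
        = {s ∈ Icc (S + 1) ((i : ℕ) + 1) | v ≤ c s} := by
      ext s
      have hne : v ≤ c s → s ≠ S := fun h hs => (hs ▸ h).not_gt hv
      simp only [mem_filter, mem_Icc]
      omega
    simp only [stageMatrix, Matrix.of_apply, add_tsub_cancel_left, hskip]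

variable {k zs c}

theorem minorsIn_stageMatrix {T : Subsemiring R} (hzs : ∀ z ∈ zs, z ∈ T) (hc : StrictMono c)
    {S : ℕ} (hS : S ≤ k + 1) : Matrix.MinorsIn T (stageMatrix k zs c S S) := by
  refine Nat.decreasingInduction (motive := fun S _ => Matrix.MinorsIn T (stageMatrix k zs c S S))
    (fun S hS ih => ?_) ?_ hS
  · have hinjected : Matrix.MinorsIn T (stageMatrix k zs c S (S + 1)) := by
      rcases S with _ | a
      · rw [stageMatrix_zero_left]
        exact ih
      · rw [← moveCol_stageMatrix k zs c (by omega) (by omega)]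
        exact ih.moveCol (by omega) fun s w haw hw => stageMatrix_apply_eq_zero k zs c haw hw s
    rw [← sweeps_stageMatrix k zs hc]
    exact hinjected.sweeps hzs _ _
  · rw [stageMatrix_top]
    exact Matrix.minorsIn_one.submatrix Fin.val_strictMono strictMono_id

theorem stageMatrix_zero_zero_apply (hc : StrictMono c) (i j : Fin k) :
    stageMatrix k zs c 0 0 i (k + c j) = PowerSeries.coeff (c j)
      (PowerSeries.X ^ (i : ℕ) * (zs.map PowerSeries.geom).prod ^ ((i : ℕ) + 2 - j)) := by
  have hcount : {s ∈ Icc 0 ((i : ℕ) + 1) | c j ≤ c s} = Icc (j : ℕ) ((i : ℕ) + 1) := by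
    ext s
    simp only [mem_filter, mem_Icc, hc.le_iff_le]
    omega
  simp only [stageMatrix, Matrix.of_apply, Nat.not_lt_zero, if_false, add_tsub_cancel_left,
    hcount, Nat.card_Icc]
  rw [if_neg (by omega)]

end Stages

theorem det_coeff_X_pow_mul_prod_geom_pow_mem {R : Type*} [CommRing R] {T : Subsemiring R}
    {zs : List R} (hzs : ∀ z ∈ zs, z ∈ T) {c : ℕ → ℕ} (hc : StrictMono c) (k : ℕ) :
    (Matrix.of fun i j : Fin k => PowerSeries.coeff (c j)
      (PowerSeries.X ^ (i : ℕ) * (zs.map PowerSeries.geom).prod ^ ((i : ℕ) + 2 - j))).det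
      ∈ T := by
  have hsub : (Matrix.of fun i j : Fin k => PowerSeries.coeff (c j)
      (PowerSeries.X ^ (i : ℕ) * (zs.map PowerSeries.geom).prod ^ ((i : ℕ) + 2 - j)))
      = (stageMatrix k zs c 0 0).submatrix id fun j : Fin k => k + c j := by
    ext i j
    simp [stageMatrix_zero_zero_apply hc]
  rw [hsub]
  exact minorsIn_stageMatrix hzs hc (Nat.zero_le _) _ _ strictMono_id
    fun a b hab => Nat.add_lt_add_left (hc hab) k

theorem hgen_eq_coeff (n i j : ℕ) :
    hgen ((n : ℤ) - i) ((i : ℤ) - j + 2) = PowerSeries.coeff n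
      (PowerSeries.X ^ i * (PowerSeries.geom X * PowerSeries.geom 1) ^ (i + 2 - j)) := by
  rw [PowerSeries.coeff_X_pow_mul', hgen]
  rcases lt_or_ge n i with hlt | hin
  · rw [if_neg (by omega), if_neg (by omega), if_neg (by omega)]
  obtain ⟨d, rfl⟩ := Nat.exists_eq_add_of_le hin
  have hd : ((i + d : ℕ) : ℤ) - i = d := by push_cast; ring
  rw [if_pos hin, hd, add_tsub_cancel_left]
  rcases le_or_gt j (i + 1) with hj | hj
  · obtain ⟨r, hr⟩ : ∃ r, i + 2 - j = r + 1 := ⟨i + 1 - j, by omega⟩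
    have hr' : ((i : ℤ) - j + 2 - 1).toNat = r := by omega
    rw [if_pos ⟨by positivity, by omega⟩, hr, PowerSeries.coeff_geom_mul_geom_one_pow, hr',
      Int.toNat_natCast]
  · rw [if_neg (by omega), show i + 2 - j = 0 by omega, pow_zero, PowerSeries.coeff_one]
    simp only [Nat.cast_eq_zero]

theorem P_eq_det_coeff {m k : ℕ} (hkm : k < m) :
    P m k = (Matrix.of fun i j : Fin k => PowerSeries.coeff (m - k - 1 + 2 * (j : ℕ))
      (PowerSeries.X ^ (i : ℕ) *
        (PowerSeries.geom X * PowerSeries.geom 1) ^ ((i : ℕ) + 2 - j))).det := by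
  unfold P
  congr 1
  ext i j
  rw [Matrix.of_apply, Matrix.of_apply, ← hgen_eq_coeff,
    show ((m - k - 1 + 2 * (j : ℕ) : ℕ) : ℤ) - i = (m : ℤ) - k - i + 2 * j - 1 by omega]

theorem P_eq_zero_of_le {m k : ℕ} (hmk : m ≤ k) (hk : 0 < k) : P m k = 0 := by
  refine Matrix.det_eq_zero_of_column_eq_zero ⟨0, hk⟩ fun i => ?_
  simp only [Matrix.of_apply]
  rw [hgen, if_neg (by omega), if_neg (by omega)]

theorem P_mem_nonnegCoeffs (m k : ℕ) : P m k ∈ nonnegCoeffs ℤ := by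
  rcases lt_or_ge k m with hkm | hmk
  · rw [P_eq_det_coeff hkm]
    simpa using det_coeff_X_pow_mul_prod_geom_pow_mem (zs := [X, 1]) (T := nonnegCoeffs ℤ)
      (by simp [X_mem_nonnegCoeffs ℤ, one_mem])
      (c := fun j => m - k - 1 + 2 * j) (fun a b hab => by dsimp; omega) k
  · rcases k.eq_zero_or_pos with rfl | hk
    · rw [P, Matrix.det_isEmpty]
      exact one_mem _
    · rw [P_eq_zero_of_le hmk hk]
      exact zero_mem _

/-- `P_{m,k}` has nonnegative (integer) coefficients. -/
theorem stmt8 (m k : ℕ) : ∀ i : ℕ, ∃ c : ℕ, (P m k).coeff i = (c : ℤ) := fun i =>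
  Int.eq_ofNat_of_zero_le (P_mem_nonnegCoeffs m k i)
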